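/- Let p and q be distributions on (ZMod 2)^2 satisfying p(0,0) + p(1,1) = q(0,0) + q(1,1) (equality of d₁ marginals). Then there exists λ : ZMod 2 × ZMod 2 × ZMod 2 → ℝ with λ(a,b,c) ≥ 0 for all a,b,c and total sum 1, such that ∑_c λ(a,b,c) = p(a,b) for all a,b, and ∑_{(a,b) : a+b = c+d} λ(a,b,c) = q(c,d) for all c,d. In particular, every simplicial distribution on the diamond scenario (two triangles glued along their d₁ faces, with outcome space the nerve of Z₂) is noncontextual. -/

import Mathlib

/-!
Glue `p` and `q` along their common `d₁` marginal by making the two triangles conditionally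
independent given the shared edge: `λ(a, b, c) = p(a, b) · q(c, d) / r(a + b)` with
`d = a + b - c`, where `r` is the common distribution of `a + b` under `p` and of `c + d`
under `q`. This works over any finite abelian group; over `ZMod 2` the distribution `r` is
fixed by its value at `0`, which is the gluing hypothesis.
-/

open Finset

/-- A distribution on `(ZMod 2)²`: nonnegative with total mass 1. -/
def IsDist2 (p : ZMod 2 → ZMod 2 → ℝ) : Prop :=
  (∀ a b, 0 ≤ p a b) ∧ (∑ a : ZMod 2, ∑ b : ZMod 2, p a b = 1)

section FiberCoupling

variable {X Y S : Type*} [Fintype X] [DecidableEq S]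

def fiberMass (p : X → ℝ) (f : X → S) (s : S) : ℝ :=
  ∑ x with f x = s, p x

/-- The coupling of `p` and `q` conditionally independent over `S`, meant to be read on the
fiber product `f x = g y`. Where the fiber mass vanishes so does `p x`, so the junk
value of `/ 0` does no harm. -/
noncomputable def fiberCoupling (p : X → ℝ) (f : X → S) (q : Y → ℝ) (x : X) (y : Y) : ℝ :=
  p x * q y / fiberMass p f (f x)

variable {p : X → ℝ} {q : Y → ℝ} {f : X → S} {g : Y → S}

lemma fiberMass_nonneg (hp : ∀ x, 0 ≤ p x) (f : X → S) (s : S) : 0 ≤ fiberMass p f s :=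
  sum_nonneg fun x _ => hp x

lemma le_fiberMass (hp : ∀ x, 0 ≤ p x) (f : X → S) (x : X) : p x ≤ fiberMass p f (f x) :=
  single_le_sum (fun x _ => hp x) (mem_filter.2 ⟨mem_univ x, rfl⟩)

lemma eq_zero_of_fiberMass_eq_zero (hp : ∀ x, 0 ≤ p x) {x : X} (h : fiberMass p f (f x) = 0) :
    p x = 0 :=
  le_antisymm (h ▸ le_fiberMass hp f x) (hp x)

lemma fiberCoupling_nonneg (hp : ∀ x, 0 ≤ p x) (hq : ∀ y, 0 ≤ q y) (x : X) (y : Y) :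
    0 ≤ fiberCoupling p f q x y :=
  div_nonneg (mul_nonneg (hp x) (hq y)) (fiberMass_nonneg hp f _)

lemma sum_fiberCoupling_left [Fintype Y] (hp : ∀ x, 0 ≤ p x)
    (hpq : fiberMass p f = fiberMass q g) (x : X) :
    ∑ y with g y = f x, fiberCoupling p f q x y = p x := by
  unfold fiberCoupling
  rw [← sum_div, ← mul_sum]
  change p x * fiberMass q g (f x) / fiberMass p f (f x) = p x
  rw [← hpq]
  exact mul_div_cancel_of_imp (eq_zero_of_fiberMass_eq_zero hp)

lemma sum_fiberCoupling_right [Fintype Y] (hq : ∀ y, 0 ≤ q y)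
    (hpq : fiberMass p f = fiberMass q g) (y : Y) :
    ∑ x with f x = g y, fiberCoupling p f q x y = q y :=
  calc ∑ x with f x = g y, fiberCoupling p f q x y
      = ∑ x with f x = g y, p x * q y / fiberMass p f (g y) :=
        sum_congr rfl fun x hx => by rw [fiberCoupling, (mem_filter.1 hx).2]
    _ = q y * fiberMass p f (g y) / fiberMass p f (g y) := by
        rw [← sum_div, ← sum_mul, mul_comm]; rfl
    _ = q y := by
        rw [hpq]
        exact mul_div_cancel_of_imp (eq_zero_of_fiberMass_eq_zero hq)

end FiberCoupling

section Diamond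

variable {G : Type*} [AddCommGroup G] [Fintype G] [DecidableEq G]

lemma sum_filter_add_eq (F : G × G → ℝ) (s : G) :
    ∑ y with y.1 + y.2 = s, F y = ∑ c, F (c, s - c) := by
  rw [sum_filter, Fintype.sum_prod_type]
  refine sum_congr rfl fun c _ => ?_
  simp only [← eq_sub_iff_add_eq', sum_ite_eq', mem_univ, if_true]

theorem exists_diamond_coupling {p q : G × G → ℝ} (hp : ∀ x, 0 ≤ p x) (hq : ∀ y, 0 ≤ q y)
    (hpq : fiberMass p (fun x => x.1 + x.2) = fiberMass q (fun y => y.1 + y.2)) :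
    ∃ lam : G × G × G → ℝ, (∀ t, 0 ≤ lam t) ∧
      (∀ a b, ∑ c, lam (a, b, c) = p (a, b)) ∧
      (∀ c d, ∑ x : G × G with x.1 + x.2 = c + d, lam (x.1, x.2, c) = q (c, d)) := by
  refine ⟨fun t : G × G × G =>
      fiberCoupling p (fun x => x.1 + x.2) q (t.1, t.2.1) (t.2.2, t.1 + t.2.1 - t.2.2),
    fun t => fiberCoupling_nonneg hp hq _ _, fun a b => ?_, fun c d => ?_⟩
  · change ∑ c, fiberCoupling p _ q (a, b) (c, a + b - c) = p (a, b)
    rw [← sum_filter_add_eq]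
    exact sum_fiberCoupling_left hp hpq (a, b)
  · calc ∑ x with x.1 + x.2 = c + d,
          fiberCoupling p (fun x => x.1 + x.2) q (x.1, x.2) (c, x.1 + x.2 - c)
        = ∑ x with x.1 + x.2 = c + d, fiberCoupling p (fun x => x.1 + x.2) q x (c, d) :=
          sum_congr rfl fun x hx => by rw [(mem_filter.1 hx).2, add_sub_cancel_left]
      _ = q (c, d) := sum_fiberCoupling_right hq hpq (c, d)

end Diamond

lemma ZMod.sum_univ_two {M : Type*} [AddCommMonoid M] (F : ZMod 2 → M) :
    ∑ a, F a = F 0 + F 1 :=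
  Fin.sum_univ_two F

lemma fiberMass_add_zmod_two_eq {p q : ZMod 2 × ZMod 2 → ℝ}
    (h0 : p (0, 0) + p (1, 1) = q (0, 0) + q (1, 1)) (htot : ∑ x, p x = ∑ x, q x) :
    fiberMass p (fun x => x.1 + x.2) = fiberMass q (fun x => x.1 + x.2) := by
  simp only [Fintype.sum_prod_type, ZMod.sum_univ_two] at htot
  funext s
  obtain rfl | rfl : s = 0 ∨ s = 1 := by revert s; decide
  all_goals
    simp only [fiberMass, sum_filter, Fintype.sum_prod_type, ZMod.sum_univ_two, zero_add, add_zero,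
      show (1 + 1 : ZMod 2) = 0 from rfl, zero_ne_one, one_ne_zero, ↓reduceIte]
    linarith

/-- **The diamond scenario is noncontextual.**
If two distributions `p`, `q` on `(ZMod 2)²` have equal `d₁` marginals
(`p 0 0 + p 1 1 = q 0 0 + q 1 1`), then there is a probability distribution `λ` on the
set of global outcome assignments (parametrized by triples `(a, b, c)`, the fourth outcome
being `d = a + b + c`) whose marginals on the two triangles are `p` and `q`. -/
theorem diamond_noncontextual (p q : ZMod 2 → ZMod 2 → ℝ)
    (hp : IsDist2 p) (hq : IsDist2 q)
    (hglue : p 0 0 + p 1 1 = q 0 0 + q 1 1) :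
    ∃ lam : ZMod 2 × ZMod 2 × ZMod 2 → ℝ,
      (∀ a b c, 0 ≤ lam (a, b, c)) ∧
      (∑ x : ZMod 2 × ZMod 2 × ZMod 2, lam x = 1) ∧
      (∀ a b, ∑ c : ZMod 2, lam (a, b, c) = p a b) ∧
      (∀ c d, ∑ x ∈ univ.filter (fun x : ZMod 2 × ZMod 2 => x.1 + x.2 = c + d),
          lam (x.1, x.2, c) = q c d) := by
  obtain ⟨hp_nonneg, hp_sum⟩ := hp
  obtain ⟨hq_nonneg, hq_sum⟩ := hq
  have hpush := fiberMass_add_zmod_two_eq (p := fun x => p x.1 x.2) (q := fun x => q x.1 x.2)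
    hglue (by simp only [Fintype.sum_prod_type, hp_sum, hq_sum])
  obtain ⟨lam, hlam_nonneg, hlam_p, hlam_q⟩ :=
    exists_diamond_coupling (fun x => hp_nonneg x.1 x.2) (fun y => hq_nonneg y.1 y.2) hpush
  refine ⟨lam, fun a b c => hlam_nonneg _, ?_, hlam_p, hlam_q⟩
  simp only [Fintype.sum_prod_type, hlam_p, hp_sum]
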